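/- arXiv:1903.08341 — 2 statements merged into one kernel-verified Lean document; each statement's English description precedes it below -/
import Mathlib

section
/- At the unique Nash equilibrium of the load-side Cournot game with L ≥ 1 real loads of demands d_l > 0 and V ≥ 1 virtual bidders, with constants α^{RT} > α^{DA} > 0, β^{DA} ∈ ℝ, the aggregate participations over all players satisfy Σ_p d_p^{DA*} = (1 − α^{DA}/((L+V+1)·α^{RT}))·Σ_{l=1}^{L} d_l and Σ_p d_p^{RT*} = (α^{DA}/((L+V+1)·α^{RT}))·Σ_{l=1}^{L} d_l. Consequently, writing d := Σ_{l=1}^{L} d_l, one has d > Σ_p d_p^{DA*} > ((L+V)/(L+V+1))·d and (1/(L+V+1))·d > Σ_p d_p^{RT*} > 0; and as V → ∞ (with L, the d_l, α^{DA}, α^{RT}, β^{DA} fixed), the total day-ahead load converges to d and the price spread λ^{DA} − λ^{RT} = −(α^{DA}/(L+V+1))·d converges to 0. -/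
/-- Expenditure of player `l` in the load-side Cournot game: given demands `dem`, a
profile `p` of day-ahead participations (real-time participation of `k` is
`dem k - p k`), prices are `λ^{DA} = α^{DA}·(∑ k, p k) + β^{DA}` and
`λ^{RT} = α^{RT}·(∑ k, dem k - p k) + λ^{DA}`, and the expenditure is
`λ^{DA}·p l + λ^{RT}·(dem l - p l)`. -/
noncomputable def expend {ι : Type*} [Fintype ι] (aDA aRT bDA : ℝ)
    (dem p : ι → ℝ) (l : ι) : ℝ :=
  (aDA * ∑ k, p k + bDA) * p l
    + (aRT * ∑ k, (dem k - p k) + (aDA * ∑ k, p k + bDA)) * (dem l - p l)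

/-- Nash equilibrium of the load-side Cournot game. -/
def IsNash {ι : Type*} [Fintype ι] [DecidableEq ι] (aDA aRT bDA : ℝ)
    (dem p : ι → ℝ) : Prop :=
  (∀ k, 0 ≤ p k) ∧
    ∀ l : ι, ∀ y : ℝ, 0 ≤ y →
      expend aDA aRT bDA dem p l ≤ expend aDA aRT bDA dem (Function.update p l y) l

/-!
Player `l`'s cost is a convex quadratic in its own day-ahead bid with leading coefficient
`α^{RT}`, so an equilibrium is characterised by the first-order conditions
`α^{RT} (p_l - R) ≥ (α^{RT} - α^{DA}) d_l`, with equality where `p_l > 0`, `R` being the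
aggregate real-time participation. These force `R > 0` and then `p_l ≥ R > 0` for every player,
so all conditions are equalities. Summing them over the `N = L + V` players and using
`∑ p + R = d` gives `(N + 1) α^{RT} R = α^{DA} d`, from which every claim follows.
-/

open Filter Finset

lemma nonneg_of_forall_sq_add_mul_nonneg {a g δ : ℝ} (ha : 0 < a) (hδ : 0 < δ)
    (h : ∀ t, 0 < t → t ≤ δ → 0 ≤ a * t ^ 2 + g * t) : 0 ≤ g := by
  by_contra! hg
  set t := min δ (-g / (2 * a))
  have ht : 0 < t := lt_min hδ (div_pos (by linarith) (by positivity))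
  have hat : a * t ≤ -g / 2 :=
    calc a * t ≤ a * (-g / (2 * a)) := mul_le_mul_of_nonneg_left (min_le_right _ _) ha.le
      _ = -g / 2 := by field_simp
  nlinarith [h t ht (min_le_left _ _)]

section Nash

variable {ι : Type*} [Fintype ι] [DecidableEq ι] {aDA aRT bDA : ℝ} {dem p : ι → ℝ}

/-- The derivative of `y ↦ expend aDA aRT bDA dem (Function.update p l y) l` at `y = p l`. -/
def marginalExpend (aDA aRT : ℝ) (dem p : ι → ℝ) (l : ι) : ℝ :=
  aRT * (p l - ∑ k, (dem k - p k)) - (aRT - aDA) * dem l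

lemma expend_update (aDA aRT bDA : ℝ) (dem p : ι → ℝ) (l : ι) (y : ℝ) :
    expend aDA aRT bDA dem (Function.update p l y) l
      = expend aDA aRT bDA dem p l + aRT * (y - p l) ^ 2
        + marginalExpend aDA aRT dem p l * (y - p l) := by
  have hsum : ∑ k, Function.update p l y k = ∑ k, p k + (y - p l) := by
    rw [sum_update_of_mem (mem_univ l), sdiff_singleton_eq_erase, ← add_sum_erase _ p (mem_univ l)]
    ring
  have hsum_rt : ∑ k, (dem k - Function.update p l y k) = ∑ k, (dem k - p k) - (y - p l) := by
    rw [sum_sub_distrib, sum_sub_distrib, hsum]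
    ring
  simp only [expend, marginalExpend, hsum, hsum_rt, Function.update_self]
  ring

namespace IsNash

variable (hp : IsNash aDA aRT bDA dem p)
include hp

lemma marginalExpend_nonneg (hRT : 0 < aRT) (l : ι) : 0 ≤ marginalExpend aDA aRT dem p l :=
  nonneg_of_forall_sq_add_mul_nonneg hRT one_pos fun t ht _ => by
    have := hp.2 l (p l + t) (add_nonneg (hp.1 l) ht.le)
    rw [expend_update, add_sub_cancel_left] at this
    linarith

lemma marginalExpend_eq_zero_of_pos (hRT : 0 < aRT) {l : ι} (hl : 0 < p l) :
    marginalExpend aDA aRT dem p l = 0 := by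
  refine le_antisymm ?_ (hp.marginalExpend_nonneg hRT l)
  have := nonneg_of_forall_sq_add_mul_nonneg (g := -marginalExpend aDA aRT dem p l) hRT hl
    fun t _ htl => by
      have := hp.2 l (p l - t) (by linarith)
      rw [expend_update, sub_sub_cancel_left] at this
      nlinarith
  linarith

variable (hDA : 0 < aDA) (hle : aDA ≤ aRT) (hdem : ∀ k, 0 ≤ dem k) (hd : 0 < ∑ k, dem k)
include hDA hle hdem hd

lemma sum_rt_pos : 0 < ∑ k, (dem k - p k) := by
  have hRT : 0 < aRT := hDA.trans_le hle
  by_contra! hR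
  -- with `R ≤ 0`, each first-order condition gives `aRT * (dem k - p k) ≥ aDA * dem k`; sum them
  have hk : ∀ k, aDA * dem k ≤ aRT * (dem k - p k) := by
    intro k
    rcases (hp.1 k).eq_or_lt with hk0 | hkpos
    · rw [← hk0, sub_zero]
      exact mul_le_mul_of_nonneg_right hle (hdem k)
    · have := hp.marginalExpend_eq_zero_of_pos hRT hkpos
      rw [marginalExpend] at this
      nlinarith
  have := sum_le_sum fun k (_ : k ∈ univ) => hk k
  rw [← mul_sum, ← mul_sum] at this
  nlinarith

lemma pos (l : ι) : 0 < p l := by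
  have hR := hp.sum_rt_pos hDA hle hdem hd
  have := hp.marginalExpend_nonneg (hDA.trans_le hle) l
  rw [marginalExpend] at this
  nlinarith [hdem l]

lemma card_add_one_mul_sum_rt :
    (Fintype.card ι + 1) * (aRT * ∑ k, (dem k - p k)) = aDA * ∑ k, dem k := by
  have hfoc : ∀ l, aRT * p l = aRT * ∑ k, (dem k - p k) + (aRT - aDA) * dem l := fun l => by
    have := hp.marginalExpend_eq_zero_of_pos (hDA.trans_le hle) (hp.pos hDA hle hdem hd l)
    rw [marginalExpend] at this
    linarith
  have hsum := sum_congr rfl fun l (_ : l ∈ univ) => hfoc l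
  simp only [sum_add_distrib, sum_const, card_univ, nsmul_eq_mul, ← mul_sum] at hsum
  rw [sum_sub_distrib] at hsum ⊢
  linear_combination -hsum

end IsNash

end Nash

lemma tendsto_add_natCast_add_one_atTop (a : ℝ) :
    Tendsto (fun V : ℕ => a + (V : ℝ) + 1) atTop atTop :=
  tendsto_atTop_add_const_right _ 1 (tendsto_atTop_add_const_left _ a tendsto_natCast_atTop_atTop)

/-- Aggregate participations and vanishing spread with virtual bidders.
With `L ≥ 1` real loads of demands `d_l > 0` (total `d = ∑_l d_l`), `V ≥ 1` virtual
bidders of demand `0`, and `α^{RT} > α^{DA} > 0`, `β^{DA} ∈ ℝ`, at the (unique) Nash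
equilibrium: `∑_p d_p^{DA*} = (1 - α^{DA}/((L+V+1) α^{RT})) d`,
`∑_p d_p^{RT*} = (α^{DA}/((L+V+1) α^{RT})) d`, hence
`d > ∑_p d_p^{DA*} > ((L+V)/(L+V+1)) d` and `(1/(L+V+1)) d > ∑_p d_p^{RT*} > 0`, and
the spread equals `λ^{DA} - λ^{RT} = -(α^{DA}/(L+V+1)) d`; as `V → ∞`, the total
day-ahead load converges to `d` and the spread converges to `0`. -/
theorem cournot_virtual_bidding_aggregate_and_limit
    (L : ℕ) (hL : 1 ≤ L)
    (aDA aRT bDA : ℝ) (h0 : 0 < aDA) (hlt : aDA < aRT)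
    (dl : Fin L → ℝ) (hdl : ∀ k, 0 < dl k)
    (d : ℝ) (hd : d = ∑ l, dl l) :
    (∀ V : ℕ, 1 ≤ V →
      ∀ p : Fin L ⊕ Fin V → ℝ,
        IsNash aDA aRT bDA (Sum.elim dl (fun _ => (0 : ℝ))) p →
        (∑ q, p q = (1 - aDA / (((L : ℝ) + (V : ℝ) + 1) * aRT)) * d) ∧
        (∑ q, (Sum.elim dl (fun _ => (0 : ℝ)) q - p q)
          = aDA / (((L : ℝ) + (V : ℝ) + 1) * aRT) * d) ∧
        d > ∑ q, p q ∧
        ∑ q, p q > ((L : ℝ) + (V : ℝ)) / ((L : ℝ) + (V : ℝ) + 1) * d ∧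
        1 / ((L : ℝ) + (V : ℝ) + 1) * d
          > ∑ q, (Sum.elim dl (fun _ => (0 : ℝ)) q - p q) ∧
        0 < ∑ q, (Sum.elim dl (fun _ => (0 : ℝ)) q - p q) ∧
        (aDA * (∑ q, p q) + bDA)
            - (aRT * (∑ q, (Sum.elim dl (fun _ => (0 : ℝ)) q - p q))
                + (aDA * (∑ q, p q) + bDA))
          = -(aDA / ((L : ℝ) + (V : ℝ) + 1)) * d) ∧
    Filter.Tendsto
      (fun V : ℕ => (1 - aDA / (((L : ℝ) + (V : ℝ) + 1) * aRT)) * d)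
      Filter.atTop (nhds d) ∧
    Filter.Tendsto
      (fun V : ℕ => -(aDA / ((L : ℝ) + (V : ℝ) + 1)) * d)
      Filter.atTop (nhds 0) := by
  have hRT : 0 < aRT := h0.trans hlt
  have hd0 : 0 < d := hd ▸ sum_pos (fun l _ => hdl l) ⟨⟨0, hL⟩, mem_univ _⟩
  have hN := tendsto_add_natCast_add_one_atTop (L : ℝ)
  refine ⟨fun V _ p hp => ?_, ?_, ?_⟩
  · have hdem : ∑ q, Sum.elim dl (fun _ : Fin V => (0 : ℝ)) q = d := by
      simp [Fintype.sum_sum_type, hd]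
    have hfoc_sum := hp.card_add_one_mul_sum_rt h0 hlt.le
      (Sum.forall.2 ⟨fun l => (hdl l).le, fun _ => le_rfl⟩) (hdem ▸ hd0)
    have hT : ∑ q, p q = d - ∑ q, (Sum.elim dl (fun _ : Fin V => (0 : ℝ)) q - p q) := by
      rw [sum_sub_distrib, hdem]; ring
    rw [hdem, Fintype.card_sum, Fintype.card_fin, Fintype.card_fin, Nat.cast_add] at hfoc_sum
    rw [hT]
    set R := ∑ q, (Sum.elim dl (fun _ : Fin V => (0 : ℝ)) q - p q)
    set n : ℝ := (L : ℝ) + (V : ℝ) + 1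
    have hn : 0 < n := by positivity
    have hR : R = aDA / (n * aRT) * d := by
      field_simp
      linarith
    have hR_pos : 0 < R := hR ▸ by positivity
    have hnR : n * R < d := by nlinarith
    refine ⟨by rw [hR]; ring, hR, by linarith, ?_, ?_, hR_pos, ?_⟩
    · rw [gt_iff_lt, div_mul_eq_mul_div, div_lt_iff₀ hn]
      linarith
    · rw [gt_iff_lt, one_div_mul_eq_div, lt_div_iff₀ hn]
      linarith
    · rw [hR]
      field_simp
      ring
  · simpa using ((tendsto_const_nhds.div_atTop (hN.atTop_mul_const hRT)).const_sub 1).mul_const d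
  · simpa using (tendsto_const_nhds.div_atTop hN).neg.mul_const d
end

section
/- At the unique Nash equilibrium of the load-side Cournot game with L ≥ 1 real loads of demands d_l > 0 and V ≥ 1 virtual bidders, with constants α^{RT} > α^{DA} > 0, β^{DA} ∈ ℝ, the real loads' total day-ahead participation equals Σ_{l=1}^{L} d_l^{DA*} = (1 − (V+1)·α^{DA}/((L+V+1)·α^{RT}))·Σ_{l=1}^{L} d_l; this quantity is strictly positive and is strictly decreasing in the number of virtual bidders V. -/
/-
Fixing everyone else, a player's cost is a convex quadratic in its own day-ahead bid, so
equilibrium is equivalent to the first-order (complementarity) conditions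
`p_k ≥ 0`, `E_k ≥ 0`, `p_k E_k = 0` for the marginal cost
`E_k = α^{RT}(p_k - T) - (α^{RT} - α^{DA}) d_k`, where `T` is the total real-time participation.
If `T ≤ 0`, complementarity forces `α^{RT} p_k ≤ (α^{RT} - α^{DA}) d_k` for every player, and
summing gives `α^{RT} T ≥ α^{DA} ∑ d_k > 0`; hence `T > 0`, every bid is interior and
`p_k = T + (1 - α^{DA}/α^{RT}) d_k`. Summing over all `N` players pins down
`T = α^{DA} ∑ d_k / ((N + 1) α^{RT})`, and summing over the real loads only gives the formula.
-/

open Finset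

lemma quadratic_kkt {a e x : ℝ} (ha : 0 < a) (hx : 0 ≤ x)
    (h : ∀ y, 0 ≤ y → 0 ≤ (y - x) * (a * (y - x) + e)) : 0 ≤ e ∧ x * e = 0 := by
  have he : 0 ≤ e := by
    by_contra! he
    have ht : 0 < -e / (2 * a) := div_pos (neg_pos.2 he) (by positivity)
    have hat : a * (-e / (2 * a)) = -e / 2 := by field_simp
    have := h (x + -e / (2 * a)) (by linarith)
    rw [add_sub_cancel_left, hat] at this
    nlinarith
  refine ⟨he, ?_⟩
  rcases hx.eq_or_lt with rfl | hx
  · exact zero_mul e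
  rcases he.eq_or_lt with rfl | he
  · exact mul_zero x
  exfalso
  set t := min x (e / (2 * a))
  have ht : 0 < t := lt_min hx (by positivity)
  have hat : a * t ≤ e / 2 :=
    calc a * t ≤ a * (e / (2 * a)) := by gcongr; exact min_le_right _ _
      _ = e / 2 := by field_simp
  have := h (x - t) (by linarith [min_le_left x (e / (2 * a))])
  nlinarith

section Equilibrium

variable {ι : Type*} [Fintype ι] {aDA aRT bDA : ℝ} {dem p : ι → ℝ}

def realTimeTotal (dem p : ι → ℝ) : ℝ := ∑ k, (dem k - p k)

def marginalCost (aDA aRT : ℝ) (dem p : ι → ℝ) (l : ι) : ℝ :=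
  aRT * (p l - realTimeTotal dem p) + (aDA - aRT) * dem l

lemma realTimeTotal_eq_sub : realTimeTotal dem p = ∑ k, dem k - ∑ k, p k :=
  sum_sub_distrib ..

lemma expend_update_sub_expend [DecidableEq ι] (l : ι) (y : ℝ) :
    expend aDA aRT bDA dem (Function.update p l y) l - expend aDA aRT bDA dem p l
      = (y - p l) * (aRT * (y - p l) + marginalCost aDA aRT dem p l) := by
  have hsum : ∑ k, Function.update p l y k = ∑ k, p k + (y - p l) := by
    rw [sum_update_of_mem (mem_univ l), ← erase_eq, sum_erase_eq_sub (mem_univ l)]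
    ring
  have hrt : ∑ k, (dem k - Function.update p l y k) = realTimeTotal dem p - (y - p l) := by
    rw [sum_sub_distrib, hsum, realTimeTotal_eq_sub]
    ring
  rw [expend, expend, hsum, hrt, Function.update_self, marginalCost, ← realTimeTotal,
    realTimeTotal_eq_sub]
  ring

namespace IsNash

variable [DecidableEq ι]

lemma kkt (hRT : 0 < aRT) (hp : IsNash aDA aRT bDA dem p) (k : ι) :
    0 ≤ marginalCost aDA aRT dem p k ∧ p k * marginalCost aDA aRT dem p k = 0 :=
  quadratic_kkt hRT (hp.1 k) fun y hy => by
    rw [← expend_update_sub_expend (bDA := bDA)]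
    exact sub_nonneg.2 (hp.2 k y hy)

lemma realTimeTotal_pos (hDA : 0 < aDA) (hlt : aDA < aRT) (hdem : ∀ k, 0 ≤ dem k)
    (hD : 0 < ∑ k, dem k) (hp : IsNash aDA aRT bDA dem p) : 0 < realTimeTotal dem p := by
  have hRT := hDA.trans hlt
  by_contra! hT
  have hk : ∀ k, aRT * p k ≤ (aRT - aDA) * dem k := by
    intro k
    rcases (hp.1 k).eq_or_lt with hzero | hpos
    · rw [← hzero, mul_zero]
      exact mul_nonneg (by linarith) (hdem k)
    · have hE := (mul_eq_zero.1 (hp.kkt hRT k).2).resolve_left hpos.ne'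
      rw [marginalCost] at hE
      nlinarith [mul_nonpos_of_nonneg_of_nonpos hRT.le hT]
  have hsum : aRT * ∑ k, p k ≤ (aRT - aDA) * ∑ k, dem k := by
    simpa only [mul_sum] using sum_le_sum fun k _ => hk k
  have := realTimeTotal_eq_sub (dem := dem) (p := p)
  nlinarith [mul_nonpos_of_nonneg_of_nonpos hRT.le hT, mul_pos hDA hD]

lemma eq_realTimeTotal_add (hDA : 0 < aDA) (hlt : aDA < aRT) (hdem : ∀ k, 0 ≤ dem k)
    (hD : 0 < ∑ k, dem k) (hp : IsNash aDA aRT bDA dem p) (k : ι) :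
    p k = realTimeTotal dem p + (1 - aDA / aRT) * dem k := by
  have hRT := hDA.trans hlt
  have hT := hp.realTimeTotal_pos hDA hlt hdem hD
  obtain ⟨hE, hpE⟩ := hp.kkt hRT k
  rw [marginalCost] at hE hpE
  have hpk : 0 < p k := by nlinarith [mul_nonneg (sub_nonneg.2 hlt.le) (hdem k)]
  have hE0 := (mul_eq_zero.1 hpE).resolve_left hpk.ne'
  field_simp
  linarith

lemma realTimeTotal_eq (hDA : 0 < aDA) (hlt : aDA < aRT) (hdem : ∀ k, 0 ≤ dem k)
    (hD : 0 < ∑ k, dem k) (hp : IsNash aDA aRT bDA dem p) :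
    realTimeTotal dem p = aDA * (∑ k, dem k) / ((Fintype.card ι + 1) * aRT) := by
  have hRT := hDA.trans hlt
  have hsum : ∑ k, p k
      = Fintype.card ι * realTimeTotal dem p + (1 - aDA / aRT) * ∑ k, dem k := by
    rw [sum_congr rfl fun k _ => hp.eq_realTimeTotal_add hDA hlt hdem hD k, sum_add_distrib,
      sum_const, card_univ, nsmul_eq_mul, mul_sum]
  have hT := realTimeTotal_eq_sub (dem := dem) (p := p)
  rw [hsum] at hT
  rw [eq_div_iff (by positivity)]
  field_simp at hT
  linarith

end IsNash

end Equilibrium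

noncomputable def realLoadShare (L V : ℕ) (aDA aRT : ℝ) : ℝ :=
  1 - ((V : ℝ) + 1) * aDA / (((L : ℝ) + (V : ℝ) + 1) * aRT)

lemma realLoadShare_pos (L V : ℕ) {aDA aRT : ℝ} (hDA : 0 < aDA) (hlt : aDA < aRT) :
    0 < realLoadShare L V aDA aRT := by
  have hRT := hDA.trans hlt
  rw [realLoadShare, sub_pos, div_lt_one (by positivity)]
  have : (0 : ℝ) ≤ L := L.cast_nonneg
  nlinarith

lemma realLoadShare_strictAnti {L : ℕ} (hL : 0 < L) {aDA aRT : ℝ} (hDA : 0 < aDA)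
    (hRT : 0 < aRT) :
    StrictAnti fun V => realLoadShare L V aDA aRT := by
  intro a b hab
  have hab' : (a : ℝ) < b := by exact_mod_cast hab
  have hL' : (0 : ℝ) < L := by exact_mod_cast hL
  dsimp only [realLoadShare]
  rw [sub_lt_sub_iff_left, div_lt_div_iff₀ (by positivity) (by positivity)]
  nlinarith [mul_pos (mul_pos hDA hRT) (mul_pos (sub_pos.2 hab') hL')]

/-- Real loads' day-ahead participation decreases with virtual bidding.
With `L ≥ 1` real loads of demands `d_l > 0`, `V ≥ 1` virtual bidders of demand `0`,
and `α^{RT} > α^{DA} > 0`, `β^{DA} ∈ ℝ`, at the (unique) Nash equilibrium the real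
loads' total day-ahead participation equals
`∑_l d_l^{DA*} = (1 - (V+1) α^{DA}/((L+V+1) α^{RT})) ∑_l d_l`; this quantity is
strictly positive and strictly decreasing in `V`. -/
theorem cournot_virtual_bidding_real_load_decreasing
    (L : ℕ) (hL : 1 ≤ L)
    (aDA aRT bDA : ℝ) (h0 : 0 < aDA) (hlt : aDA < aRT)
    (dl : Fin L → ℝ) (hdl : ∀ k, 0 < dl k) :
    (∀ V : ℕ, 1 ≤ V →
      ∀ p : Fin L ⊕ Fin V → ℝ,
        IsNash aDA aRT bDA (Sum.elim dl (fun _ => (0 : ℝ))) p →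
        ∑ l, p (Sum.inl l)
          = (1 - ((V : ℝ) + 1) * aDA / (((L : ℝ) + (V : ℝ) + 1) * aRT))
            * ∑ l, dl l) ∧
    (∀ V : ℕ, 1 ≤ V →
      0 < (1 - ((V : ℝ) + 1) * aDA / (((L : ℝ) + (V : ℝ) + 1) * aRT))
            * ∑ l, dl l) ∧
    StrictAnti (fun V : ℕ =>
      (1 - ((V : ℝ) + 1) * aDA / (((L : ℝ) + (V : ℝ) + 1) * aRT))
        * ∑ l, dl l) := by
  have hD : 0 < ∑ l, dl l := sum_pos (fun l _ => hdl l) ⟨⟨0, hL⟩, mem_univ _⟩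
  refine ⟨fun V _ p hp => ?_, fun V _ => mul_pos (realLoadShare_pos L V h0 hlt) hD,
    fun a b hab => mul_lt_mul_of_pos_right (realLoadShare_strictAnti hL h0 (h0.trans hlt) hab) hD⟩
  have hdem : ∀ k, 0 ≤ Sum.elim dl (fun _ : Fin V => (0 : ℝ)) k := by
    rintro (l | v)
    exacts [(hdl l).le, le_rfl]
  have hsum : ∑ k, Sum.elim dl (fun _ : Fin V => (0 : ℝ)) k = ∑ l, dl l := by
    simp [Fintype.sum_sum_type]
  have hD' : 0 < ∑ k, Sum.elim dl (fun _ : Fin V => (0 : ℝ)) k := hsum ▸ hD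
  have hT := hp.realTimeTotal_eq h0 hlt hdem hD'
  simp only [hp.eq_realTimeTotal_add h0 hlt hdem hD', sum_add_distrib, sum_const, card_univ,
    nsmul_eq_mul, Sum.elim_inl, ← mul_sum, hT, hsum, Fintype.card_sum, Fintype.card_fin]
  have hRT := h0.trans hlt
  push_cast
  field_simp
  ring
end
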